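/- Let ξ ∈ Mₘ(ℂ) ⊗ M_d(ℂ) be a density matrix (positive semidefinite, trace 1) and let η = (tr_m ⊗ id_d)(ξ) ∈ M_d(ℂ) be its partial trace over the first factor. Let γ ∈ M_k(ℂ) ⊗ M_d(ℂ) be any purification of η (a rank-one projection onto a unit vector h ∈ ℂ^k ⊗ ℂ^d with (tr_k ⊗ id_d)(γ) = η). Then there exists a completely positive trace-preserving map Φ : M_k(ℂ) → Mₘ(ℂ) such that (Φ ⊗ id_d)(γ) = ξ. -/

import Mathlib

/-!
Write `ξ = S Sᴴ` and reshape `S` into operators `Lₑ : ℂᵈ → ℂᵐ`, and `h` into `H : ℂᵈ → ℂᵏ`.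
The partial-trace condition says `∑ₑ Lₑᴴ Lₑ = Hᴴ H`, so `H v ↦ (Lₑ v)ₑ` is a well-defined partial
isometry on the range of `H`. Completing it by the projection onto `(range H)ᗮ` gives Kraus
operators `K_α` with `∑ K_αᴴ K_α = 1` and `K_α H ∈ {Lₑ, 0}`. The Kraus map `x ↦ ∑ K_α x K_αᴴ` is
completely positive and trace preserving, and it sends the block `H eₐ e_bᴴ Hᴴ` of `γ` to the block
`∑ₑ Lₑ eₐ e_bᴴ Lₑᴴ` of `ξ`.
-/

open Matrix
open scoped ComplexOrder

/-- `Φ : M_k(ℂ) → M_m(ℂ)` is completely positive. -/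
def IsCompletelyPositive {k m : ℕ}
    (Φ : Matrix (Fin k) (Fin k) ℂ →ₗ[ℂ] Matrix (Fin m) (Fin m) ℂ) : Prop :=
  ∀ (r : ℕ) (M : Matrix (Fin r × Fin k) (Fin r × Fin k) ℂ), M.PosSemidef →
    Matrix.PosSemidef (fun p q : Fin r × Fin m =>
      Φ (fun s t => M (p.1, s) (q.1, t)) p.2 q.2)

open scoped Kronecker

namespace Matrix

theorem sum_conjTranspose_mul_self_submatrix_prodMk {α ι m n : Type*} [Fintype ι] [Fintype m]
    [NonUnitalNonAssocSemiring α] [StarRing α] (A : Matrix (ι × m) n α) :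
    ∑ i, (A.submatrix (Prod.mk i) id)ᴴ * A.submatrix (Prod.mk i) id = Aᴴ * A := by
  ext s t
  simp only [sum_apply, mul_apply, conjTranspose_apply, submatrix_apply, id, Fintype.sum_prod_type]

section RCLike

variable {𝕜 : Type*} [RCLike 𝕜] {ι m n d p : Type*} [Fintype ι] [Fintype m] [Fintype n]
  [Fintype d] [Fintype p]

theorem IsHermitian.exists_pseudoinverse [DecidableEq n] {G : Matrix n n 𝕜} (hG : G.IsHermitian) :
    ∃ G' : Matrix n n 𝕜, G'.IsHermitian ∧ G * G' * G = G ∧ G' * G * G' = G' ∧ Commute G G' := by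
  have hG : IsSelfAdjoint G := hG
  have hmul (f g : ℝ → ℝ) : cfc f G * cfc g G = cfc (fun x => f x * g x) G :=
    (cfc_mul f g G (G.finite_real_spectrum.continuousOn f)
      (G.finite_real_spectrum.continuousOn g)).symm
  have hid : cfc (fun x : ℝ => x) G = G := cfc_id' ℝ G
  -- Since `0⁻¹ = 0`, `cfc (·⁻¹) G` inverts `G` on its support and vanishes on its kernel.
  refine ⟨cfc (fun x : ℝ => x⁻¹) G, cfc_predicate _ G, ?_, ?_, ?_⟩
  · calc G * cfc (fun x : ℝ => x⁻¹) G * G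
        = cfc (fun x : ℝ => x) G * cfc (fun x : ℝ => x⁻¹) G * cfc (fun x : ℝ => x) G := by
          rw [hid]
      _ = G := by rw [hmul, hmul]; simp only [mul_inv_mul_cancel, hid]
  · calc cfc (fun x : ℝ => x⁻¹) G * G * cfc (fun x : ℝ => x⁻¹) G
        = cfc (fun x : ℝ => x⁻¹) G * cfc (fun x : ℝ => x) G * cfc (fun x : ℝ => x⁻¹) G := by
          rw [hid]
      _ = cfc (fun x : ℝ => x⁻¹) G := by
          rw [hmul, hmul]
          congr! 2 with x
          simpa using mul_inv_mul_cancel x⁻¹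
  · simpa only [hid] using cfc_commute_cfc (fun x : ℝ => x) (fun x : ℝ => x⁻¹) G

theorem mul_eq_self_of_conjTranspose_mul_self_mul_eq {Z : Matrix p n 𝕜} {P : Matrix n n 𝕜}
    (hP : P.IsHermitian) (hZP : Zᴴ * Z * P = Zᴴ * Z) : Z * P = Z := by
  have hPZ : P * (Zᴴ * Z) = Zᴴ * Z := by
    simpa only [conjTranspose_mul, conjTranspose_conjTranspose, hP.eq, Matrix.mul_assoc]
      using congrArg conjTranspose hZP
  have h0 : (Z - Z * P)ᴴ * (Z - Z * P) = 0 := by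
    simp only [conjTranspose_sub, conjTranspose_mul, hP.eq, Matrix.sub_mul, Matrix.mul_sub,
      ← Matrix.mul_assoc, hZP]
    rw [Matrix.mul_assoc P, hPZ, hZP, sub_self]
  exact (sub_eq_zero.mp (conjTranspose_mul_self_eq_zero.mp h0)).symm

theorem exists_mul_eq_of_conjTranspose_mul_self_eq [DecidableEq n] {H : Matrix n d 𝕜}
    {Ψ : Matrix p d 𝕜} (h : Ψᴴ * Ψ = Hᴴ * H) :
    ∃ (W : Matrix p n 𝕜) (Q : Matrix n n 𝕜), W * H = Ψ ∧ Q * H = 0 ∧ Wᴴ * W + Qᴴ * Q = 1 := by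
  classical
  have hG := isHermitian_conjTranspose_mul_self H
  obtain ⟨G', hG', hGG'G, hG'GG', hcomm⟩ := hG.exists_pseudoinverse
  have hP : (G' * (Hᴴ * H)).IsHermitian := by
    rw [IsHermitian, conjTranspose_mul, hG'.eq, hG.eq, hcomm.eq]
  have hHP : H * (G' * (Hᴴ * H)) = H :=
    mul_eq_self_of_conjTranspose_mul_self_mul_eq hP (by rw [← Matrix.mul_assoc, hGG'G])
  have hΨP : Ψ * (G' * (Hᴴ * H)) = Ψ :=
    mul_eq_self_of_conjTranspose_mul_self_mul_eq hP (by rw [h, ← Matrix.mul_assoc, hGG'G])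
  set R := H * G' * Hᴴ with hR
  have hRH : R.IsHermitian := by
    rw [IsHermitian, hR, conjTranspose_mul, conjTranspose_mul, hG'.eq, conjTranspose_conjTranspose,
      Matrix.mul_assoc]
  have hRR : R * R = R := calc
    R * R = H * (G' * (Hᴴ * H) * G') * Hᴴ := by simp only [hR, Matrix.mul_assoc]
    _ = R := by rw [hG'GG', hR, Matrix.mul_assoc]
  -- `Ψ G' Hᴴ` is the partial isometry `H v ↦ Ψ v`, and `R` the projection onto the range of `H`.
  refine ⟨Ψ * G' * Hᴴ, 1 - R, ?_, ?_, ?_⟩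
  · rw [Matrix.mul_assoc, Matrix.mul_assoc, hΨP]
  · rw [Matrix.sub_mul, Matrix.one_mul, hR, Matrix.mul_assoc, Matrix.mul_assoc, hHP, sub_self]
  · have hW : (Ψ * G' * Hᴴ)ᴴ * (Ψ * G' * Hᴴ) = R := calc
      (Ψ * G' * Hᴴ)ᴴ * (Ψ * G' * Hᴴ) = H * (G' * (Ψᴴ * Ψ) * G') * Hᴴ := by
        simp only [conjTranspose_mul, conjTranspose_conjTranspose, hG'.eq, Matrix.mul_assoc]
      _ = R := by rw [h, hG'GG', hR, Matrix.mul_assoc]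
    have hQ : (1 - R)ᴴ * (1 - R) = 1 - R := by
      rw [conjTranspose_sub, conjTranspose_one, hRH.eq, sub_mul, mul_sub, mul_sub, hRR, one_mul,
        mul_one, one_mul]
      abel
    rw [hW, hQ, add_sub_cancel]

theorem exists_kraus_family_mul_eq_sumElim [Nonempty m] [DecidableEq n] {H : Matrix n d 𝕜}
    {L : ι → Matrix m d 𝕜} (hL : ∑ i, (L i)ᴴ * L i = Hᴴ * H) :
    ∃ K : ι ⊕ n → Matrix m n 𝕜, ∑ j, (K j)ᴴ * K j = 1 ∧ (fun j => K j * H) = Sum.elim L 0 := by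
  classical
  obtain ⟨i₀⟩ := ‹Nonempty m›
  set Ψ : Matrix (ι × m) d 𝕜 := of fun q => L q.1 q.2
  obtain ⟨W, Q, hWH, hQH, hWQ⟩ := exists_mul_eq_of_conjTranspose_mul_self_eq (Ψ := Ψ) (H := H)
    (by rw [← sum_conjTranspose_mul_self_submatrix_prodMk]; exact hL)
  have hQ : ∑ u : n, (single i₀ u (1 : 𝕜) * Q)ᴴ * (single i₀ u (1 : 𝕜) * Q) = Qᴴ * Q := by
    simp only [conjTranspose_mul, conjTranspose_single, star_one, Matrix.mul_assoc]
    simp only [← Matrix.mul_assoc (single _ _ _), single_mul_single_same, mul_one,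
      ← Matrix.mul_sum, ← Matrix.sum_mul, sum_single_one, Matrix.one_mul]
  refine ⟨Sum.elim (fun i => W.submatrix (Prod.mk i) id) (fun u => single i₀ u (1 : 𝕜) * Q),
    ?_, ?_⟩
  · rw [Fintype.sum_sum_type]
    simp only [Sum.elim_inl, Sum.elim_inr]
    rw [sum_conjTranspose_mul_self_submatrix_prodMk, hQ, hWQ]
  · funext j
    rcases j with i | u
    · simp only [Sum.elim_inl]
      rw [← submatrix_id_id H, ← submatrix_mul _ _ _ _ _ Function.bijective_id, hWH]
      rfl
    · simp [Matrix.mul_assoc, hQH]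

end RCLike

section Kraus

variable {R : Type*} [CommSemiring R] [StarRing R] {ι m n d : Type*} [Fintype ι] [Fintype n]

def krausMap (K : ι → Matrix m n R) : Matrix n n R →ₗ[R] Matrix m m R where
  toFun x := ∑ i, K i * x * (K i)ᴴ
  map_add' x y := by simp only [Matrix.mul_add, Matrix.add_mul, Finset.sum_add_distrib]
  map_smul' c x := by
    simp only [Matrix.mul_smul, Matrix.smul_mul, Finset.smul_sum, RingHom.id_apply]

theorem krausMap_apply (K : ι → Matrix m n R) (x : Matrix n n R) :
    krausMap K x = ∑ i, K i * x * (K i)ᴴ := rfl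

theorem trace_krausMap [Fintype m] [DecidableEq n] {K : ι → Matrix m n R}
    (hK : ∑ i, (K i)ᴴ * K i = 1) (x : Matrix n n R) : (krausMap K x).trace = x.trace := by
  simp only [krausMap_apply, trace_sum, Matrix.mul_assoc, trace_mul_comm (K _)]
  rw [← trace_sum, ← Matrix.mul_sum, hK, Matrix.mul_one]

theorem krausMap_mul_mul_conjTranspose [Fintype d] (K : ι → Matrix m n R) (H : Matrix n d R)
    (x : Matrix d d R) : krausMap K (H * x * Hᴴ) = krausMap (fun i => K i * H) x := by
  simp only [krausMap_apply, conjTranspose_mul, Matrix.mul_assoc]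

theorem krausMap_sumElim_zero {κ : Type*} [Fintype κ] (K : ι → Matrix m n R) :
    krausMap (Sum.elim K (0 : κ → Matrix m n R)) = krausMap K := by
  ext1 x
  simp [krausMap_apply, Fintype.sum_sum_type]

theorem mul_single_one_mul_conjTranspose_apply [DecidableEq n] (A : Matrix m n R) (a b : n)
    (i j : m) : (A * single a b (1 : R) * Aᴴ) i j = A i a * star (A j b) := by
  rw [mul_apply, Finset.sum_eq_single b (fun t _ ht => by simp [ht]) (by simp),
    mul_single_apply_same, mul_one, conjTranspose_apply]

theorem krausMap_single_one_apply [DecidableEq n] (K : ι → Matrix m n R) (a b : n) (i j : m) :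
    krausMap K (single a b (1 : R)) i j = ∑ l, K l i a * star (K l j b) := by
  simp only [krausMap_apply, sum_apply, mul_single_one_mul_conjTranspose_apply]

theorem one_kronecker_mul_mul_conjTranspose_apply {r : Type*} [Fintype r] [DecidableEq r]
    (K : Matrix m n R) (M : Matrix (r × n) (r × n) R) (p q : r × m) :
    ((1 : Matrix r r R) ⊗ₖ K * M * ((1 : Matrix r r R) ⊗ₖ K)ᴴ) p q =
      (K * of (fun s t => M (p.1, s) (q.1, t)) * Kᴴ) p.2 q.2 := by
  simp [mul_apply, Fintype.sum_prod_type, one_apply, ite_mul, apply_ite star, mul_ite]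

end Kraus

end Matrix

theorem isCompletelyPositive_krausMap {k m : ℕ} {ι : Type*} [Fintype ι]
    (K : ι → Matrix (Fin m) (Fin k) ℂ) : IsCompletelyPositive (krausMap K) := by
  intro r M hM
  have hblock :
      (fun p q : Fin r × Fin m => krausMap K (fun s t => M (p.1, s) (q.1, t)) p.2 q.2) =
        ∑ i, ((1 : Matrix (Fin r) (Fin r) ℂ) ⊗ₖ K i) * M *
          ((1 : Matrix (Fin r) (Fin r) ℂ) ⊗ₖ K i)ᴴ := by
    ext p q
    rw [Matrix.sum_apply]
    simp only [one_kronecker_mul_mul_conjTranspose_apply]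
    exact Matrix.sum_apply _ _ _ _
  rw [hblock]
  exact posSemidef_sum _ fun i _ => hM.mul_mul_conjTranspose_same _

theorem exists_cptp_of_purification_general {m d k : ℕ}
    (ξ : Matrix (Fin m × Fin d) (Fin m × Fin d) ℂ)
    (hξ : ξ.PosSemidef) (hξtr : ξ.trace = 1)
    (h : Fin k × Fin d → ℂ)
    (γ : Matrix (Fin k × Fin d) (Fin k × Fin d) ℂ)
    (hγ : ∀ p q, γ p q = h p * star (h q))
    (hpur : ∀ a b : Fin d, (∑ i : Fin k, γ (i, a) (i, b)) = ∑ i : Fin m, ξ (i, a) (i, b)) :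
    ∃ Φ : Matrix (Fin k) (Fin k) ℂ →ₗ[ℂ] Matrix (Fin m) (Fin m) ℂ,
      IsCompletelyPositive Φ ∧ (∀ x, (Φ x).trace = x.trace) ∧
      ∀ (i' j' : Fin m) (a b : Fin d),
        (Φ (fun i j => γ (i, a) (j, b))) i' j' = ξ (i', a) (j', b) := by
  have : Nonempty (Fin m) := by
    refine Fin.pos_iff_nonempty.mp (Nat.pos_of_ne_zero ?_)
    rintro rfl
    simp [Matrix.trace] at hξtr
  obtain ⟨S, rfl⟩ : ∃ S, ξ = S * Sᴴ := by
    open scoped MatrixOrder in exact CStarAlgebra.nonneg_iff_eq_mul_star_self.mp hξ.nonneg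
  set H : Matrix (Fin k) (Fin d) ℂ := of fun i a => h (i, a)
  have hγH (a b : Fin d) :
      (fun i j => γ (i, a) (j, b) : Matrix (Fin k) (Fin k) ℂ) = H * single a b (1 : ℂ) * Hᴴ := by
    ext i j
    rw [mul_single_one_mul_conjTranspose_apply, hγ]
    rfl
  set L : Fin m × Fin d → Matrix (Fin m) (Fin d) ℂ := fun e => of fun i a => S (i, a) e
  have hL : ∑ e, (L e)ᴴ * L e = Hᴴ * H := by
    ext a b
    have := hpur b a
    simp only [Matrix.sum_apply, hγ, mul_apply, conjTranspose_apply, L, H, of_apply] at this ⊢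
    rw [Finset.sum_comm]
    simpa only [mul_comm] using this.symm
  obtain ⟨K, hK, hKH⟩ := exists_kraus_family_mul_eq_sumElim hL
  refine ⟨krausMap K, isCompletelyPositive_krausMap K, trace_krausMap hK, fun i' j' a b => ?_⟩
  rw [hγH, krausMap_mul_mul_conjTranspose, hKH, krausMap_sumElim_zero, krausMap_single_one_apply,
    mul_apply]
  simp only [L, of_apply, conjTranspose_apply]

/-- Let `ξ ∈ M_m ⊗ M_d` be a density matrix with partial trace `η = (tr_m ⊗ id_d)(ξ)`,
and let `γ = |h⟩⟨h| ∈ M_k ⊗ M_d` be a purification of `η` (rank-one projection onto a unit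
vector `h` with `(tr_k ⊗ id_d)(γ) = η`).  Then there exists a completely positive trace
preserving map `Φ : M_k(ℂ) → M_m(ℂ)` with `(Φ ⊗ id_d)(γ) = ξ`. -/
theorem exists_cptp_of_purification {m d k : ℕ}
    (ξ : Matrix (Fin m × Fin d) (Fin m × Fin d) ℂ)
    (hξ : ξ.PosSemidef) (hξtr : ξ.trace = 1)
    (h : Fin k × Fin d → ℂ) (hunit : ∑ p, h p * star (h p) = 1)
    (γ : Matrix (Fin k × Fin d) (Fin k × Fin d) ℂ)
    (hγ : ∀ p q, γ p q = h p * star (h q))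
    (hpur : ∀ a b : Fin d, (∑ i : Fin k, γ (i, a) (i, b)) = ∑ i : Fin m, ξ (i, a) (i, b)) :
    ∃ Φ : Matrix (Fin k) (Fin k) ℂ →ₗ[ℂ] Matrix (Fin m) (Fin m) ℂ,
      IsCompletelyPositive Φ ∧ (∀ x, (Φ x).trace = x.trace) ∧
      ∀ (i' j' : Fin m) (a b : Fin d),
        (Φ (fun i j => γ (i, a) (j, b))) i' j' = ξ (i', a) (j', b) :=
  exists_cptp_of_purification_general ξ hξ hξtr h γ hγ hpur
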